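/- arXiv:2507.06032 — 2 statements merged into one kernel-verified Lean document; each statement's English description precedes it below -/
import Mathlib

section
/- For every abstract online covering problem that is (α, γ)-decomposable (α ≥ 1, γ ≥ 1), every finite request set X̂, and every integer i with 1 ≤ i ≤ |X̂|, there exist a set A ⊆ X̂ with |A| ≥ i and a finite solution set T with Feas A T and c(T) ≤ g_{α,γ}(|X̂|) · m_i(X̂). -/
open Finset

/-- An abstract online covering problem. -/
structure CoveringProblem (X S : Type) [DecidableEq X] [Fintype S] [DecidableEq S] where
  cost : S → ℝ
  cost_nonneg : ∀ s, 0 ≤ cost s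
  Feas : Finset X → Finset S → Prop
  feas_union : ∀ A₁ T₁ A₂ T₂, Feas A₁ T₁ → Feas A₂ T₂ → Feas (A₁ ∪ A₂) (T₁ ∪ T₂)
  feas_mono : ∀ A T A' T', Feas A T → A' ⊆ A → T ⊆ T' → Feas A' T'
  feas_univ : ∀ A, Feas A Finset.univ

variable {X S : Type} [DecidableEq X] [Fintype S] [DecidableEq S]

/-- Cost of a finite set of solution items. -/
def CoveringProblem.setCost (P : CoveringProblem X S) (T : Finset S) : ℝ :=
  ∑ s ∈ T, P.cost s

/-- Cost of a cheapest feasible solution for a finite request set. -/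
noncomputable def CoveringProblem.optCost (P : CoveringProblem X S) (A : Finset X) : ℝ :=
  sInf {r : ℝ | ∃ T : Finset S, P.Feas A T ∧ r = P.setCost T}

/-- A deterministic online algorithm: prefix-monotone (irrevocable purchases) and feasible. -/
def CoveringProblem.IsOnlineAlg (P : CoveringProblem X S) (ALG : List X → Finset S) : Prop :=
  (∀ (σ : List X) (x : X), ALG σ ⊆ ALG (σ ++ [x])) ∧
  ∀ σ : List X, P.Feas σ.toFinset (ALG σ)

/-- ρ-competitiveness on duplicate-free request sequences. -/
def CoveringProblem.IsCompetitive (P : CoveringProblem X S) (ρ : ℕ → ℝ)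
    (ALG : List X → Finset S) : Prop :=
  ∀ σ : List X, σ.Nodup → P.setCost (ALG σ) ≤ ρ σ.length * P.optCost σ.toFinset

/-- The prediction error η(σ) = min(|Xσ|, |Xσ \ X̂| + |X̂ \ Xσ|). -/
def predErr (Xhat : Finset X) (σ : List X) : ℕ :=
  min σ.toFinset.card ((σ.toFinset \ Xhat).card + (Xhat \ σ.toFinset).card)


/-- `m_j(R)`: minimum of `opt(A)` over subsets `A ⊆ R` of cardinality `j`. -/
noncomputable def CoveringProblem.mCost (P : CoveringProblem X S) (R : Finset X) (j : ℕ) : ℝ :=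
  sInf {r : ℝ | ∃ A : Finset X, A ⊆ R ∧ A.card = j ∧ r = P.optCost A}

/-- (α, γ)-decomposability. -/
def CoveringProblem.Decomposable (P : CoveringProblem X S) (α γ : ℝ) : Prop :=
  ∀ (R : Finset X) (i : ℕ), 1 ≤ i → i ≤ R.card →
    ∃ (B : Finset X) (T : Finset S), B ⊆ R ∧ (i : ℝ) / γ ≤ (B.card : ℝ) ∧
      P.Feas B T ∧ P.setCost T ≤ α * P.mCost R i

/-- `g_{α,γ}(t)`. -/
noncomputable def gFun (α γ : ℝ) (t : ℕ) : ℝ :=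
  if γ = 1 then α else α * (1 + Real.log t / Real.log (γ / (γ - 1)))

/-
Grow `A ⊆ X̂` greedily from `A = ∅`: apply decomposability to the uncovered part `X̂ \ A`
with the deficit `d = i - |A|`. Since `m_d(X̂ \ A) ≤ m_i(X̂)`, each round costs at most `α · m_i(X̂)`,
and it covers at least `d / γ` new requests, so the deficit shrinks by the factor `1 - 1/γ`.
After `⌊log_β i⌋ + 1` rounds, `β = γ / (γ - 1)`, the deficit is below one, hence zero.
-/

lemma exists_lt_pow_succ_and_le_logb {β x y : ℝ} (hβ : 1 < β) (hx : 1 ≤ x) (hxy : x ≤ y) :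
    ∃ n : ℕ, x < β ^ (n + 1) ∧ (n : ℝ) ≤ Real.logb β y := by
  have hx₀ : 0 < x := by linarith
  refine ⟨⌊Real.logb β x⌋₊, ?_, ?_⟩
  · rw [← Real.rpow_natCast, ← Real.logb_lt_iff_lt_rpow hβ hx₀]
    push_cast
    exact Nat.lt_floor_add_one _
  · calc (⌊Real.logb β x⌋₊ : ℝ) ≤ Real.logb β x := Nat.floor_le (Real.logb_nonneg hβ hx)
      _ ≤ Real.logb β y := Real.logb_le_logb_of_le hβ hx₀ hxy

namespace CoveringProblem

variable (P : CoveringProblem X S)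

lemma setCost_nonneg (T : Finset S) : 0 ≤ P.setCost T :=
  sum_nonneg fun s _ => P.cost_nonneg s

lemma setCost_union_le (T₁ T₂ : Finset S) :
    P.setCost (T₁ ∪ T₂) ≤ P.setCost T₁ + P.setCost T₂ := by
  have h := sum_union_inter (s₁ := T₁) (s₂ := T₂) (f := P.cost)
  have h₀ := P.setCost_nonneg (T₁ ∩ T₂)
  unfold setCost at h₀ ⊢
  linarith

lemma finite_feasCosts (A : Finset X) :
    {r : ℝ | ∃ T : Finset S, P.Feas A T ∧ r = P.setCost T}.Finite :=
  (Set.finite_range P.setCost).subset (by rintro r ⟨T, _, rfl⟩; exact ⟨T, rfl⟩)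

lemma optCost_le_setCost {A : Finset X} {T : Finset S} (h : P.Feas A T) :
    P.optCost A ≤ P.setCost T :=
  csInf_le (P.finite_feasCosts A).bddBelow ⟨T, h, rfl⟩

lemma exists_feas_setCost_eq_optCost (A : Finset X) :
    ∃ T : Finset S, P.Feas A T ∧ P.optCost A = P.setCost T :=
  have hne : {r : ℝ | ∃ T : Finset S, P.Feas A T ∧ r = P.setCost T}.Nonempty :=
    ⟨_, univ, P.feas_univ A, rfl⟩
  hne.csInf_mem (P.finite_feasCosts A)

lemma optCost_nonneg (A : Finset X) : 0 ≤ P.optCost A := by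
  obtain ⟨T, -, hT⟩ := P.exists_feas_setCost_eq_optCost A
  exact hT ▸ P.setCost_nonneg T

lemma optCost_mono {A' A : Finset X} (h : A' ⊆ A) : P.optCost A' ≤ P.optCost A := by
  obtain ⟨T, hT, hEq⟩ := P.exists_feas_setCost_eq_optCost A
  exact hEq ▸ P.optCost_le_setCost (P.feas_mono A T A' T hT h subset_rfl)

lemma finite_optCosts_powersetCard (R : Finset X) (j : ℕ) :
    {r : ℝ | ∃ A : Finset X, A ⊆ R ∧ A.card = j ∧ r = P.optCost A}.Finite := by
  refine (R.powerset.finite_toSet.image P.optCost).subset ?_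
  rintro r ⟨A, hA, -, rfl⟩
  exact ⟨A, by simpa using hA, rfl⟩

lemma mCost_le_optCost {R A : Finset X} (hA : A ⊆ R) : P.mCost R A.card ≤ P.optCost A :=
  csInf_le (P.finite_optCosts_powersetCard R A.card).bddBelow ⟨A, hA, rfl, rfl⟩

lemma exists_optCost_eq_mCost {R : Finset X} {j : ℕ} (h : j ≤ R.card) :
    ∃ A ⊆ R, A.card = j ∧ P.mCost R j = P.optCost A := by
  obtain ⟨A, hA, hc⟩ := exists_subset_card_eq h
  have hne : {r : ℝ | ∃ A : Finset X, A ⊆ R ∧ A.card = j ∧ r = P.optCost A}.Nonempty :=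
    ⟨_, A, hA, hc, rfl⟩
  exact hne.csInf_mem (P.finite_optCosts_powersetCard R j)

lemma mCost_nonneg {R : Finset X} {j : ℕ} (h : j ≤ R.card) : 0 ≤ P.mCost R j := by
  obtain ⟨A, -, -, hA⟩ := P.exists_optCost_eq_mCost h
  exact hA ▸ P.optCost_nonneg A

lemma mCost_sdiff_le {R A : Finset X} {i : ℕ} (hi : i ≤ R.card) :
    P.mCost (R \ A) (i - A.card) ≤ P.mCost R i := by
  obtain ⟨C, hCR, rfl, hC⟩ := P.exists_optCost_eq_mCost hi
  obtain ⟨D, hDC, hD⟩ := exists_subset_card_eq (le_card_sdiff A C)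
  calc P.mCost (R \ A) (C.card - A.card) ≤ P.optCost D :=
        hD ▸ P.mCost_le_optCost (hDC.trans (sdiff_subset_sdiff hCR subset_rfl))
    _ ≤ P.optCost C := P.optCost_mono (hDC.trans sdiff_subset)
    _ = P.mCost R C.card := hC.symm

variable {P} {α γ : ℝ}

lemma Decomposable.exists_shrink_deficit (hdec : P.Decomposable α γ) (hα : 0 ≤ α)
    {R A : Finset X} {i : ℕ} (hAR : A ⊆ R) (hAi : A.card < i)
    (hiR : i ≤ R.card) :
    ∃ (B : Finset X) (T : Finset S), B ⊆ R \ A ∧ P.Feas B T ∧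
      P.setCost T ≤ α * P.mCost R i ∧
      (i : ℝ) - (A ∪ B).card ≤ (1 - γ⁻¹) * ((i : ℝ) - A.card) := by
  have hd : i - A.card ≤ (R \ A).card := by rw [card_sdiff_of_subset hAR]; omega
  obtain ⟨B, T, hB, hBcard, hT, hcost⟩ := hdec (R \ A) (i - A.card) (by omega) hd
  refine ⟨B, T, hB, hT, hcost.trans (by gcongr; exact P.mCost_sdiff_le hiR), ?_⟩
  have hdisj : Disjoint A B := disjoint_of_subset_right hB disjoint_sdiff
  rw [Nat.cast_sub hAi.le] at hBcard
  rw [card_union_of_disjoint hdisj, Nat.cast_add]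
  linarith [show (1 - γ⁻¹) * ((i : ℝ) - A.card) = (i - A.card) - (i - A.card) / γ by ring]

lemma Decomposable.exists_feas_of_deficit_mul_pow_lt_one (hdec : P.Decomposable α γ)
    (hα : 0 ≤ α) (hγ : 1 ≤ γ) {R : Finset X} {i : ℕ} (hiR : i ≤ R.card) (n : ℕ)
    {A : Finset X} {T : Finset S} (hAR : A ⊆ R) (hT : P.Feas A T)
    (hdef : ((i : ℝ) - A.card) * (1 - γ⁻¹) ^ n < 1) :
    ∃ (A' : Finset X) (T' : Finset S), A' ⊆ R ∧ i ≤ A'.card ∧ P.Feas A' T' ∧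
      P.setCost T' ≤ P.setCost T + n * (α * P.mCost R i) := by
  have hm : 0 ≤ α * P.mCost R i := mul_nonneg hα (P.mCost_nonneg hiR)
  induction n generalizing A T with
  | zero =>
    have hiA : (i : ℝ) < A.card + 1 := by simp only [pow_zero, mul_one] at hdef; linarith
    exact ⟨A, T, hAR, Nat.lt_add_one_iff.1 (by exact_mod_cast hiA), hT, by simp⟩
  | succ n ih =>
    by_cases hAi : i ≤ A.card
    · exact ⟨A, T, hAR, hAi, hT, le_add_of_nonneg_right (mul_nonneg (by positivity) hm)⟩
    obtain ⟨B, TB, hB, hTB, hcost, hshrink⟩ :=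
      hdec.exists_shrink_deficit hα hAR (not_le.1 hAi) hiR
    have hρ : 0 ≤ 1 - γ⁻¹ := sub_nonneg.2 (inv_le_one_of_one_le₀ hγ)
    have hdef' : ((i : ℝ) - (A ∪ B).card) * (1 - γ⁻¹) ^ n < 1 :=
      calc ((i : ℝ) - (A ∪ B).card) * (1 - γ⁻¹) ^ n
          ≤ (1 - γ⁻¹) * ((i : ℝ) - A.card) * (1 - γ⁻¹) ^ n := by gcongr
        _ = ((i : ℝ) - A.card) * (1 - γ⁻¹) ^ (n + 1) := by ring
        _ < 1 := hdef
    obtain ⟨A', T', hA'R, hiA', hT', hcost'⟩ :=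
      ih (union_subset hAR (hB.trans sdiff_subset)) (P.feas_union A T B TB hT hTB) hdef'
    refine ⟨A', T', hA'R, hiA', hT', ?_⟩
    have := P.setCost_union_le T TB
    push_cast
    linarith

end CoveringProblem

theorem stmt3 :
    ∀ (X S : Type) [DecidableEq X] [Fintype S] [DecidableEq S]
      (P : CoveringProblem X S) (α γ : ℝ), 1 ≤ α → 1 ≤ γ → P.Decomposable α γ →
      ∀ (Xhat : Finset X) (i : ℕ), 1 ≤ i → i ≤ Xhat.card →
        ∃ (A : Finset X) (T : Finset S), A ⊆ Xhat ∧ i ≤ A.card ∧ P.Feas A T ∧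
          P.setCost T ≤ gFun α γ Xhat.card * P.mCost Xhat i := by
  intro X S _ _ _ P α γ hα hγ hdec Xhat i hi1 hi2
  obtain ⟨B, T, hB, hT, hcost, hshrink⟩ :=
    hdec.exists_shrink_deficit (by linarith) (empty_subset Xhat)
      (by rw [card_empty]; exact hi1) hi2
  rw [empty_union, card_empty, Nat.cast_zero, sub_zero] at hshrink
  have hBX : B ⊆ Xhat := hB.trans sdiff_subset
  rcases hγ.eq_or_lt with rfl | hγ1
  · refine ⟨B, T, hBX, ?_, hT, by simpa [gFun] using hcost⟩
    exact_mod_cast (by simpa using hshrink : (i : ℝ) ≤ B.card)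
  set β := γ / (γ - 1)
  have hβ : 1 < β := by rw [lt_div_iff₀ (by linarith)]; linarith
  have hρ : 1 - γ⁻¹ = β⁻¹ := by rw [inv_div]; field_simp
  obtain ⟨n, hin, hn⟩ :=
    exists_lt_pow_succ_and_le_logb hβ (Nat.one_le_cast.2 hi1) (Nat.cast_le.2 hi2)
  have hdef : ((i : ℝ) - B.card) * (1 - γ⁻¹) ^ n < 1 :=
    calc ((i : ℝ) - B.card) * (1 - γ⁻¹) ^ n ≤ (1 - γ⁻¹) * i * (1 - γ⁻¹) ^ n := by
          gcongr; rw [hρ]; positivity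
      _ = i / β ^ (n + 1) := by rw [hρ, inv_pow, pow_succ]; ring
      _ < 1 := (div_lt_one (by positivity)).2 hin
  obtain ⟨A, T', hA, hiA, hT', hcost'⟩ :=
    hdec.exists_feas_of_deficit_mul_pow_lt_one (by linarith) hγ hi2 n hBX hT hdef
  refine ⟨A, T', hA, hiA, hT', ?_⟩
  have hm := P.mCost_nonneg hi2
  rw [gFun, if_neg hγ1.ne', Real.log_div_log]
  calc P.setCost T' ≤ (1 + n) * α * P.mCost Xhat i := by linarith
    _ ≤ α * (1 + Real.logb β Xhat.card) * P.mCost Xhat i := by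
      rw [mul_comm _ α]; gcongr
end

section
/- Let an abstract online covering problem, a real g ≥ 1, and a finite request set X̂ be given, together with pairwise disjoint subsets X_1, …, X_r of X̂ and finite solution sets T_1, …, T_r with Feas X_i T_i for each i, satisfying, with R_i := X̂ \ (X_1 ∪ … ∪ X_i) (so R_0 = X̂): |X_i| ≥ |R_{i−1}|/2 for every 1 ≤ i ≤ r (property (A)); c(T_i) ≤ g · m_{|X_i|}(R_{i−1}) for every 2 ≤ i ≤ r and c(T_1) ≤ g · m_{⌈|X̂|/2⌉}(X̂) (property (D)). Let X be a finite request set and Δ₋ := |X̂ \ X|. If 1 ≤ m ≤ r and Δ₋ ≤ |R_m|, then opt(X) ≥ c(T_j)/g for every 1 ≤ j ≤ m. -/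
open Finset

variable {X S : Type} [DecidableEq X] [Fintype S] [DecidableEq S]

/-- Residual set `R_i := X̂ \ (X_1 ∪ … ∪ X_i)`. -/
def resSet (Xhat : Finset X) (Xs : ℕ → Finset X) (i : ℕ) : Finset X :=
  Xhat \ (Finset.Icc 1 i).biUnion Xs


lemma optCost_nonneg' (P : CoveringProblem X S) (A : Finset X) : 0 ≤ P.optCost A := by
  apply Real.sInf_nonneg
  rintro x ⟨T, -, rfl⟩
  exact Finset.sum_nonneg fun s _ => P.cost_nonneg s

lemma optCost_mono' (P : CoveringProblem X S) {A B : Finset X} (h : A ⊆ B) :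
    P.optCost A ≤ P.optCost B := by
  apply csInf_le_csInf
  · exact ⟨0, by rintro x ⟨T, -, rfl⟩; exact Finset.sum_nonneg fun s _ => P.cost_nonneg s⟩
  · exact ⟨P.setCost Finset.univ, Finset.univ, P.feas_univ B, rfl⟩
  · rintro x ⟨T, hT, rfl⟩
    exact ⟨T, P.feas_mono B T A T hT h le_rfl, rfl⟩

lemma mCost_le_optCost' (P : CoveringProblem X S) {A R : Finset X} {k : ℕ}
    (hAR : A ⊆ R) (hA : A.card = k) : P.mCost R k ≤ P.optCost A := by
  apply csInf_le
  · exact ⟨0, by rintro x ⟨B, -, -, rfl⟩; exact optCost_nonneg' P B⟩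
  · exact ⟨A, hAR, hA, rfl⟩

lemma resSet_zero' (Xhat : Finset X) (Xs : ℕ → Finset X) : resSet Xhat Xs 0 = Xhat := by
  simp [resSet]

lemma resSet_succ' (Xhat : Finset X) (Xs : ℕ → Finset X) (j : ℕ) (hj : 1 ≤ j) :
    resSet Xhat Xs j = resSet Xhat Xs (j - 1) \ Xs j := by
  ext x
  simp only [resSet, Finset.mem_sdiff, Finset.mem_biUnion, Finset.mem_Icc, not_exists, not_and]
  constructor
  · rintro ⟨hx, h⟩
    exact ⟨⟨hx, fun i hi => h i ⟨hi.1, by omega⟩⟩, h j ⟨hj, le_rfl⟩⟩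
  · rintro ⟨⟨hx, h⟩, hxj⟩
    refine ⟨hx, fun i hi => ?_⟩
    rcases eq_or_ne i j with rfl | hne
    · exact hxj
    · exact h i ⟨hi.1, by omega⟩

lemma resSet_anti' (Xhat : Finset X) (Xs : ℕ → Finset X) {i j : ℕ} (h : i ≤ j) :
    resSet Xhat Xs j ⊆ resSet Xhat Xs i := by
  apply Finset.sdiff_subset_sdiff le_rfl
  apply Finset.biUnion_subset_biUnion_of_subset_left
  exact Finset.Icc_subset_Icc le_rfl h

theorem stmt4 :
    ∀ (X S : Type) [DecidableEq X] [Fintype S] [DecidableEq S]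
      (P : CoveringProblem X S) (g : ℝ), 1 ≤ g →
      ∀ (Xhat : Finset X) (r : ℕ) (Xs : ℕ → Finset X) (Ts : ℕ → Finset S),
        (∀ i, 1 ≤ i → i ≤ r → Xs i ⊆ Xhat) →
        (∀ i j, 1 ≤ i → i < j → j ≤ r → Disjoint (Xs i) (Xs j)) →
        (∀ i, 1 ≤ i → i ≤ r → P.Feas (Xs i) (Ts i)) →
        -- property (A)
        (∀ i, 1 ≤ i → i ≤ r →
          ((resSet Xhat Xs (i - 1)).card : ℝ) / 2 ≤ ((Xs i).card : ℝ)) →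
        -- property (D)
        (∀ i, 2 ≤ i → i ≤ r →
          P.setCost (Ts i) ≤ g * P.mCost (resSet Xhat Xs (i - 1)) (Xs i).card) →
        P.setCost (Ts 1) ≤ g * P.mCost Xhat ((Xhat.card + 1) / 2) →
        ∀ (Xreq : Finset X) (m : ℕ), 1 ≤ m → m ≤ r →
          (Xhat \ Xreq).card ≤ (resSet Xhat Xs m).card →
          ∀ j, 1 ≤ j → j ≤ m → P.setCost (Ts j) / g ≤ P.optCost Xreq := by
  intro X S _ _ _ P g hg Xhat r Xs Ts hsub hdisj hfeas hA hD hD1 Xreq m hm1 hmr hDelta j hj1 hjm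
  have hg0 : (0:ℝ) < g := lt_of_lt_of_le one_pos hg
  have hjr : j ≤ r := le_trans hjm hmr
  -- X_j ⊆ R_{j-1}
  have hXjR : Xs j ⊆ resSet Xhat Xs (j - 1) := by
    intro x hx
    simp only [resSet, Finset.mem_sdiff, Finset.mem_biUnion, Finset.mem_Icc, not_exists,
      not_and]
    refine ⟨hsub j hj1 hjr hx, fun i hi hxi => ?_⟩
    exact Finset.disjoint_left.mp (hdisj i j hi.1 (by omega) hjr) hxi hx
  have hRsub : resSet Xhat Xs (j - 1) ⊆ Xhat := Finset.sdiff_subset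
  -- card facts
  have hcard1 : (resSet Xhat Xs j).card + (Xs j).card = (resSet Xhat Xs (j - 1)).card := by
    rw [resSet_succ' Xhat Xs j hj1]
    exact Finset.card_sdiff_add_card_eq_card hXjR
  have hcard2 : (resSet Xhat Xs m).card ≤ (resSet Xhat Xs j).card :=
    Finset.card_le_card (resSet_anti' Xhat Xs hjm)
  have hcard4 : (resSet Xhat Xs (j - 1) \ Xreq).card ≤ (Xhat \ Xreq).card :=
    Finset.card_le_card (Finset.sdiff_subset_sdiff hRsub le_rfl)
  have hcard5 : (resSet Xhat Xs (j - 1) ∩ Xreq).card + (resSet Xhat Xs (j - 1) \ Xreq).card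
      = (resSet Xhat Xs (j - 1)).card := Finset.card_inter_add_card_sdiff _ _
  have hkey : (Xs j).card ≤ (resSet Xhat Xs (j - 1) ∩ Xreq).card := by omega
  -- target cardinality
  set k : ℕ := if j = 1 then (Xhat.card + 1) / 2 else (Xs j).card with hk
  have hk1 : k ≤ (Xs j).card := by
    rcases eq_or_ne j 1 with h1 | h1
    · subst h1
      have := hA 1 le_rfl (le_trans hm1 hmr)
      rw [resSet_zero'] at this
      have h2 : (Xhat.card : ℝ) ≤ (Xs 1).card * 2 := by linarith [(div_le_iff₀ (by norm_num : (0:ℝ) < 2)).mp this]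
      have h3 : Xhat.card ≤ (Xs 1).card * 2 := by exact_mod_cast h2
      have hkk : k = (Xhat.card + 1) / 2 := by rw [hk]; simp
      omega
    · simp [hk, h1]
  have hkle : k ≤ (resSet Xhat Xs (j - 1) ∩ Xreq).card := le_trans hk1 hkey
  obtain ⟨A, hAsub, hAcard⟩ := Finset.exists_subset_card_eq hkle
  have hAR : A ⊆ resSet Xhat Xs (j - 1) := hAsub.trans (Finset.inter_subset_left)
  have hAX : A ⊆ Xreq := hAsub.trans (Finset.inter_subset_right)
  have hmc : P.mCost (resSet Xhat Xs (j - 1)) k ≤ P.optCost Xreq :=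
    le_trans (mCost_le_optCost' P hAR hAcard) (optCost_mono' P hAX)
  have hTs : P.setCost (Ts j) ≤ g * P.mCost (resSet Xhat Xs (j - 1)) k := by
    rcases eq_or_ne j 1 with h1 | h1
    · subst h1
      rw [resSet_zero']
      simpa [hk] using hD1
    · have := hD j (by omega) hjr
      simpa [hk, h1] using this
  rw [div_le_iff₀ hg0]
  calc P.setCost (Ts j) ≤ g * P.mCost (resSet Xhat Xs (j - 1)) k := hTs
    _ ≤ g * P.optCost Xreq := by
        exact mul_le_mul_of_nonneg_left hmc (le_of_lt hg0)
    _ = P.optCost Xreq * g := mul_comm _ _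
end
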